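/- arXiv:2103.11003 — 2 statements merged into one kernel-verified Lean document; each statement's English description precedes it below -/
import Mathlib

section
/- Let n ≥ 1, γ > 0, C > 0, let y₁, …, yₙ ∈ ℝ, x₁, …, xₙ ∈ ℝ^p, and let v₁, …, vₙ ≥ 0 be weights with ‖vᵢ xᵢ‖₂ ≤ C for every i. Let ρ : ℝ → ℝ be three times continuously differentiable with |ρ'''(t)| ≤ γ ρ''(t) for all t ∈ ℝ. Define the Schweppe loss L(θ) = (1/n) Σᵢ ρ((yᵢ − ⟨xᵢ, θ⟩) vᵢ) for θ ∈ ℝ^p. Then L is (γC, 2)-self-concordant, i.e. |∇³L(θ)[v,u,u]| ≤ γC·(uᵀ∇²L(θ)u)·‖v‖₂ for all θ, u, v ∈ ℝ^p. -/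
/-!
Each summand of the loss is a ridge function `θ ↦ ρ (c + ℓ θ)` with `‖ℓ‖ = ‖vᵢ xᵢ‖ ≤ C`. Its
`k`-th derivative is `ρ⁽ᵏ⁾ (c + ℓ θ) ∏ⱼ ℓ mⱼ`, so at `(w, u, u)` the third derivative is
`ρ⁽³⁾ · ℓ w · (ℓ u)²`, at most `γ ρ⁽²⁾ · C ‖w‖ · (ℓ u)²` in absolute value, i.e. `γ C ‖w‖` times the
second derivative at `(u, u)`. Sums and nonnegative multiples preserve this bound.
-/

open scoped RealInnerProductSpace

/-- `(γ, 2)`-self-concordance. -/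
def IsSelfConcordant {E : Type*} [NormedAddCommGroup E] [NormedSpace ℝ E]
    (γ : ℝ) (f : E → ℝ) : Prop :=
  ∀ θ u w : E, |iteratedFDeriv ℝ 3 f θ ![w, u, u]| ≤ γ * iteratedFDeriv ℝ 2 f θ ![u, u] * ‖w‖

theorem iteratedFDeriv_comp_const_add_clm_apply {𝕜 E F : Type*} [NontriviallyNormedField 𝕜]
    [NormedAddCommGroup E] [NormedSpace 𝕜 E] [NormedAddCommGroup F] [NormedSpace 𝕜 F]
    {k : ℕ} {f : 𝕜 → F} (hf : ContDiff 𝕜 k f) (c : 𝕜) (ℓ : E →L[𝕜] 𝕜) (θ : E)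
    (m : Fin k → E) :
    iteratedFDeriv 𝕜 k (fun θ ↦ f (c + ℓ θ)) θ m = (∏ j, ℓ (m j)) • iteratedDeriv k f (c + ℓ θ) := by
  have hshift : ContDiff 𝕜 k (fun t ↦ f (c + t)) := hf.comp (contDiff_const.add contDiff_id)
  change iteratedFDeriv 𝕜 k ((fun t ↦ f (c + t)) ∘ ℓ) θ m = _
  rw [ℓ.iteratedFDeriv_comp_right hshift θ le_rfl,
    ContinuousMultilinearMap.compContinuousLinearMap_apply,
    iteratedFDeriv_apply_eq_iteratedDeriv_mul_prod, iteratedDeriv_comp_const_add]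

section IsSelfConcordant

variable {E : Type*} [NormedAddCommGroup E] [NormedSpace ℝ E]

theorem isSelfConcordant_comp_const_add_clm {f : ℝ → ℝ} {γ C : ℝ} (hf : ContDiff ℝ 3 f)
    (hfγ : ∀ t, |iteratedDeriv 3 f t| ≤ γ * iteratedDeriv 2 f t) (c : ℝ) {ℓ : E →L[ℝ] ℝ}
    (hℓ : ‖ℓ‖ ≤ C) :
    IsSelfConcordant (γ * C) (fun θ ↦ f (c + ℓ θ)) := by
  intro θ u w
  rw [iteratedFDeriv_comp_const_add_clm_apply hf, iteratedFDeriv_comp_const_add_clm_apply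
    (hf.of_le (by norm_num))]
  simp only [Fin.prod_univ_three, Fin.prod_univ_two, Matrix.cons_val_zero, Matrix.cons_val_one,
    Matrix.cons_val_two, smul_eq_mul]
  set t := c + ℓ θ
  have hw : |ℓ w| ≤ C * ‖w‖ := by simpa only [Real.norm_eq_abs] using ℓ.le_of_opNorm_le hℓ w
  have hft : 0 ≤ γ * iteratedDeriv 2 f t := (abs_nonneg _).trans (hfγ t)
  calc |ℓ w * ℓ u * ℓ u * iteratedDeriv 3 f t|
      = |iteratedDeriv 3 f t| * |ℓ w| * (ℓ u * ℓ u) := by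
        rw [abs_mul, abs_mul, abs_mul, mul_assoc |ℓ w|, abs_mul_abs_self]; ring
    _ ≤ γ * iteratedDeriv 2 f t * (C * ‖w‖) * (ℓ u * ℓ u) := by
        gcongr
        · exact mul_self_nonneg _
        · exact hfγ t
    _ = γ * C * (ℓ u * ℓ u * iteratedDeriv 2 f t) * ‖w‖ := by ring

theorem IsSelfConcordant.const_mul {f : E → ℝ} {γ a : ℝ} (h : IsSelfConcordant γ f)
    (hf : ContDiff ℝ 3 f) (ha : 0 ≤ a) :
    IsSelfConcordant γ (fun θ ↦ a * f θ) := by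
  intro θ u w
  simp only [← smul_eq_mul (a := a)]
  rw [iteratedFDeriv_const_smul_apply' hf.contDiffAt,
    iteratedFDeriv_const_smul_apply' (hf.of_le (by norm_num)).contDiffAt]
  simp only [smul_apply, smul_eq_mul, abs_mul, abs_of_nonneg ha]
  linarith [mul_le_mul_of_nonneg_left (h θ u w) ha]

theorem IsSelfConcordant.sum {ι : Type*} {s : Finset ι} {f : ι → E → ℝ} {γ : ℝ}
    (h : ∀ i ∈ s, IsSelfConcordant γ (f i)) (hf : ∀ i ∈ s, ContDiff ℝ 3 (f i)) :
    IsSelfConcordant γ (fun θ ↦ ∑ i ∈ s, f i θ) := by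
  intro θ u w
  rw [iteratedFDeriv_sum hf, iteratedFDeriv_sum fun i hi ↦ (hf i hi).of_le (by norm_num)]
  simp only [Finset.sum_apply, sum_apply, Finset.mul_sum, Finset.sum_mul]
  exact (Finset.abs_sum_le_sum_abs _ _).trans (Finset.sum_le_sum fun i hi ↦ h i hi θ u w)

end IsSelfConcordant

theorem stmt_13_general {p : ℕ} (n : ℕ) (γ C : ℝ)
    (y : Fin n → ℝ) (x : Fin n → EuclideanSpace ℝ (Fin p)) (v : Fin n → ℝ)
    (hvx : ∀ i, ‖v i • x i‖ ≤ C)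
    (ρ : ℝ → ℝ) (hρC3 : ContDiff ℝ 3 ρ)
    (hρSC : ∀ t : ℝ, |iteratedDeriv 3 ρ t| ≤ γ * iteratedDeriv 2 ρ t)
    (L : EuclideanSpace ℝ (Fin p) → ℝ)
    (hL : ∀ θ, L θ = (1 / (n : ℝ)) * ∑ i, ρ ((y i - ⟪x i, θ⟫) * v i)) :
    ∀ θ u w : EuclideanSpace ℝ (Fin p),
      |iteratedFDeriv ℝ 3 L θ ![w, u, u]| ≤
        γ * C * iteratedFDeriv ℝ 2 L θ ![u, u] * ‖w‖ := by
  set ℓ : Fin n → EuclideanSpace ℝ (Fin p) →L[ℝ] ℝ := fun i ↦ innerSL ℝ (-(v i • x i))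
  have hL' : L = fun θ ↦ (1 / (n : ℝ)) * ∑ i, ρ (y i * v i + ℓ i θ) := by
    funext θ
    rw [hL]
    refine congrArg _ (Finset.sum_congr rfl fun i _ ↦ congrArg ρ ?_)
    simp only [ℓ, innerSL_apply_apply, inner_neg_left, real_inner_smul_left]
    ring
  have hℓ : ∀ i, ‖ℓ i‖ ≤ C := fun i ↦ by simpa only [ℓ, innerSL_apply_norm, norm_neg] using hvx i
  have hterm : ∀ i, ContDiff ℝ 3 fun θ ↦ ρ (y i * v i + ℓ i θ) :=
    fun i ↦ hρC3.comp (contDiff_const.add (ℓ i).contDiff)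
  rw [hL']
  refine IsSelfConcordant.const_mul ?_ (ContDiff.sum fun i _ ↦ hterm i) (by positivity)
  exact IsSelfConcordant.sum
    (fun i _ ↦ isSelfConcordant_comp_const_add_clm hρC3 hρSC _ (hℓ i)) fun i _ ↦ hterm i

/-- if `ρ` is `(γ,2)`-self-concordant and the Schweppe weights satisfy
`‖vᵢ xᵢ‖ ≤ C`, then the Schweppe loss `L(θ) = (1/n) ∑ᵢ ρ((yᵢ - ⟨xᵢ,θ⟩) vᵢ)` is
`(γ C, 2)`-self-concordant. -/
theorem stmt_13 {p : ℕ} (n : ℕ) (hn : 1 ≤ n) (γ C : ℝ) (hγ : 0 < γ) (hC : 0 < C)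
    (y : Fin n → ℝ) (x : Fin n → EuclideanSpace ℝ (Fin p)) (v : Fin n → ℝ)
    (hv : ∀ i, 0 ≤ v i) (hvx : ∀ i, ‖v i • x i‖ ≤ C)
    (ρ : ℝ → ℝ) (hρC3 : ContDiff ℝ 3 ρ)
    (hρSC : ∀ t : ℝ, |iteratedDeriv 3 ρ t| ≤ γ * iteratedDeriv 2 ρ t)
    (L : EuclideanSpace ℝ (Fin p) → ℝ)
    (hL : ∀ θ, L θ = (1 / (n : ℝ)) * ∑ i, ρ ((y i - ⟪x i, θ⟫) * v i)) :
    ∀ θ u w : EuclideanSpace ℝ (Fin p),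
      |iteratedFDeriv ℝ 3 L θ ![w, u, u]| ≤
        γ * C * iteratedFDeriv ℝ 2 L θ ![u, u] * ‖w‖ :=
  stmt_13_general n γ C y x v hvx ρ hρC3 hρSC L hL
end

section
/- Let L : ℝ^p → ℝ be twice continuously differentiable with ‖∇L(θ)‖₂ ≤ B and ‖∇²L(θ)‖₂ ≤ B̄ for all θ ∈ ℝ^p, and let θ̂ be a global minimizer of L. Let Θ₀ ⊆ ℝ^p be a convex set containing θ̂ on which ∇²L(θ) is positive definite and which satisfies τ₀-Hessian-stability with some τ₀ ≥ 1, and let the stepsize satisfy 0 < η ≤ 1/(2τ₀). Let θ^{(0)}, …, θ^{(K)} be damped noisy Newton iterates θ^{(k+1)} = θ^{(k)} − η[∇²L(θ^{(k)})]⁻¹∇L(θ^{(k)}) + ηN_k, with ‖N_k‖₂ ≤ ε for all k < K, and suppose θ^{(k)} ∈ Θ₀ for all 0 ≤ k ≤ K. Then L(θ^{(K)}) − L(θ̂) ≤ (1 − η/τ₀)^K (L(θ^{(0)}) − L(θ̂)) + (τ₀/η)(ηBε + η²B̄τ₀ε²). -/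
/-!
On a segment inside `Θ₀`, Hessian stability pins the second derivative of `L` between `q / τ₀`
and `τ₀ q`, where `q` is the Hessian quadratic form of the increment at the starting point.
Integrating twice gives a lower and an upper quadratic model of `L` around every point of `Θ₀`.
Minimizing the lower model at `θ̂` by completing the square bounds the gap `L θ - L θ̂` by
`τ₀ / 2 · ⟪∇²L(θ) v, v⟫`, where `v` is the Newton direction. The upper model along the noisy step
shows that, for `τ₀ η ≤ 1/2`, the step decreases `L` by at least `η / 2 · ⟪∇²L(θ) v, v⟫`, up to
the noise terms `η B ε + τ₀ η² B̄ ε²`. So each step contracts the gap by `1 - η / τ₀` up to that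
additive noise, and unrolling the recursion sums the noise geometrically.
-/

open scoped RealInnerProductSpace
open Set

theorem le_add_deriv_add_half_of_deriv2_le {φ φ' φ'' : ℝ → ℝ} {M : ℝ}
    (hφ : ∀ t, HasDerivAt φ (φ' t) t) (hφ' : ∀ t, HasDerivAt φ' (φ'' t) t)
    (hM : ∀ t ∈ Ioo (0 : ℝ) 1, φ'' t ≤ M) : φ 1 ≤ φ 0 + φ' 0 + M / 2 := by
  have hφ'_le : ∀ t ∈ Icc (0 : ℝ) 1, φ' t ≤ φ' 0 + M * t := by
    intro t ht
    have := (convex_Icc (0 : ℝ) 1).image_sub_le_mul_sub_of_deriv_le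
      (fun s _ => (hφ' s).continuousAt.continuousWithinAt)
      (fun s _ => (hφ' s).differentiableAt.differentiableWithinAt)
      (fun s hs => (hφ' s).deriv ▸ hM s (by simpa using hs))
      0 (left_mem_Icc.2 zero_le_one) t ht ht.1
    linarith
  set ψ : ℝ → ℝ := fun t => φ t - φ' 0 * t - M * t ^ 2 / 2
  have hψ : ∀ t, HasDerivAt ψ (φ' t - φ' 0 - M * t) t := fun t => by
    refine (((hφ t).sub ((hasDerivAt_id' t).const_mul (φ' 0))).sub
      (((hasDerivAt_pow 2 t).const_mul M).div_const 2)).congr_deriv ?_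
    norm_num
    ring
  have := (convex_Icc (0 : ℝ) 1).image_sub_le_mul_sub_of_deriv_le (C := 0)
    (fun s _ => (hψ s).continuousAt.continuousWithinAt)
    (fun s _ => (hψ s).differentiableAt.differentiableWithinAt)
    (fun s hs => (hψ s).deriv ▸ by linarith [hφ'_le s (interior_subset hs)])
    0 (left_mem_Icc.2 zero_le_one) 1 (right_mem_Icc.2 zero_le_one) zero_le_one
  simp only [ψ] at this
  linarith

theorem le_pow_mul_add_div_of_le_mul_add {a : ℕ → ℝ} {δ c : ℝ} {K : ℕ} (hδ : 0 < δ)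
    (hδ1 : δ ≤ 1) (hc : 0 ≤ c) (h : ∀ k < K, a (k + 1) ≤ (1 - δ) * a k + c) :
    a K ≤ (1 - δ) ^ K * a 0 + c / δ := by
  suffices ∀ k ≤ K, a k ≤ (1 - δ) ^ k * a 0 + c / δ from this K le_rfl
  intro k
  induction k with
  | zero => intro _; simp only [pow_zero, one_mul]; linarith [div_nonneg hc hδ.le]
  | succ k ih =>
    intro hk
    calc a (k + 1) ≤ (1 - δ) * a k + c := h k hk
      _ ≤ (1 - δ) * ((1 - δ) ^ k * a 0 + c / δ) + c := by
        gcongr ?_ + c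
        exact mul_le_mul_of_nonneg_left (ih (by omega)) (by linarith)
      _ = (1 - δ) ^ (k + 1) * a 0 + c / δ := by field_simp; ring

section InnerProductSpace

variable {E : Type*} [NormedAddCommGroup E] [InnerProductSpace ℝ E]

namespace ContinuousLinearMap

theorem IsPositive.two_mul_inner_le {A : E →L[ℝ] E} (hA : A.IsPositive) (u w : E) :
    2 * ⟪A u, w⟫ ≤ ⟪A u, u⟫ + ⟪A w, w⟫ := by
  have h := hA.inner_nonneg_left (u - w)
  have hsymm : ⟪A w, u⟫ = ⟪A u, w⟫ := by
    rw [hA.inner_left_eq_inner_right, real_inner_comm]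
  simp only [map_sub, inner_sub_left, inner_sub_right] at h
  linarith

theorem inner_apply_self_le {A : E →L[ℝ] E} {b ε : ℝ} (hA : ‖A‖ ≤ b) {n : E} (hn : ‖n‖ ≤ ε) :
    ⟪A n, n⟫ ≤ b * ε ^ 2 :=
  calc ⟪A n, n⟫ ≤ ‖A‖ * ‖n‖ * ‖n‖ :=
        (real_inner_le_norm _ _).trans (mul_le_mul_of_nonneg_right (A.le_opNorm n) (norm_nonneg _))
    _ ≤ b * ε ^ 2 := by
        have hb : 0 ≤ b := (norm_nonneg _).trans hA
        have hε : 0 ≤ ε := (norm_nonneg _).trans hn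
        rw [sq, ← mul_assoc]
        gcongr

theorem isUnit_of_forall_inner_pos [FiniteDimensional ℝ E] {A : E →L[ℝ] E}
    (hA : ∀ u ≠ 0, 0 < ⟪u, A u⟫) : IsUnit A := by
  have hinj : Function.Injective A := by
    refine (injective_iff_map_eq_zero A).2 fun u hu => ?_
    by_contra h
    simpa [hu] using hA u h
  exact A.isUnit_iff_bijective.2
    ⟨hinj, LinearMap.injective_iff_surjective (f := (A : E →ₗ[ℝ] E)).1 hinj⟩

theorem apply_ringInverse_apply {A : E →L[ℝ] E} (hA : IsUnit A) (y : E) :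
    A (Ring.inverse A y) = y := by
  rw [← mul_apply_eq_comp, Ring.mul_inverse_cancel A hA, one_apply_eq_self]

end ContinuousLinearMap

def IsHessianStableOn (H : E → E →L[ℝ] E) (τ : ℝ) (s : Set E) : Prop :=
  ∀ θ₁ ∈ s, ∀ θ₂ ∈ s, ⟪θ₁ - θ₂, H θ₂ (θ₁ - θ₂)⟫ ≤ τ * ⟪θ₁ - θ₂, H θ₁ (θ₁ - θ₂)⟫

theorem IsHessianStableOn.inner_le_of_sub_eq_smul {H : E → E →L[ℝ] E} {τ : ℝ} {s : Set E}
    (hs : IsHessianStableOn H τ s) {θ₁ θ₂ d : E} (h₁ : θ₁ ∈ s) (h₂ : θ₂ ∈ s) {t : ℝ} (ht : t ≠ 0)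
    (hd : θ₁ - θ₂ = t • d) : ⟪H θ₂ d, d⟫ ≤ τ * ⟪H θ₁ d, d⟫ := by
  have h := hs θ₁ h₁ θ₂ h₂
  simp only [hd, map_smul, real_inner_smul_left, real_inner_smul_right] at h
  rw [real_inner_comm d (H θ₂ d), real_inner_comm d (H θ₁ d)]
  nlinarith [mul_pos (sq_pos_of_ne_zero ht) (sq_pos_of_ne_zero ht)]

variable [CompleteSpace E] {L : E → ℝ} {H : E → E →L[ℝ] E}

theorem isSymmetric_of_hasFDerivAt_gradient (hL : Differentiable ℝ L)
    (hH : ∀ x, HasFDerivAt (gradient L) (H x) x) (x : E) : (H x).IsSymmetric := by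
  have h1 : ∀ y, HasFDerivAt L (innerSL ℝ (gradient L y)) y := fun y =>
    (hL y).hasGradientAt.hasFDerivAt
  have h2 := (innerSL ℝ).hasFDerivAt.comp x (hH x)
  intro u w
  exact (second_derivative_symmetric h1 h2 w u).symm.trans (real_inner_comm _ _)

theorem isPositive_of_hasFDerivAt_gradient (hL : Differentiable ℝ L)
    (hH : ∀ x, HasFDerivAt (gradient L) (H x) x) {x : E} (hpos : ∀ u ≠ 0, 0 < ⟪u, H x u⟫) :
    (H x).IsPositive := by
  refine (H x).isPositive_iff.2 ⟨isSymmetric_of_hasFDerivAt_gradient hL hH x, fun u => ?_⟩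
  rcases eq_or_ne u 0 with rfl | hu
  · simp
  · rw [real_inner_comm]
    exact (hpos u hu).le

theorem hasDerivAt_comp_add_smul (hL : Differentiable ℝ L) (x d : E) (t : ℝ) :
    HasDerivAt (fun s : ℝ => L (x + s • d)) ⟪gradient L (x + t • d), d⟫ t := by
  have hline : HasDerivAt (fun s : ℝ => x + s • d) d t := by
    simpa using ((hasDerivAt_id t).smul_const d).const_add x
  exact (hL _).hasGradientAt.hasFDerivAt.comp_hasDerivAt t hline

theorem hasDerivAt_inner_gradient_comp_add_smul (hH : ∀ x, HasFDerivAt (gradient L) (H x) x)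
    (x d : E) (t : ℝ) :
    HasDerivAt (fun s : ℝ => ⟪gradient L (x + s • d), d⟫) ⟪H (x + t • d) d, d⟫ t := by
  have hline : HasDerivAt (fun s : ℝ => x + s • d) d t := by
    simpa using ((hasDerivAt_id t).smul_const d).const_add x
  simpa using ((hH _).comp_hasDerivAt t hline).inner ℝ (hasDerivAt_const t d)

theorem le_add_inner_gradient_add_half_of_hessian_le (hL : Differentiable ℝ L)
    (hH : ∀ x, HasFDerivAt (gradient L) (H x) x) {x y : E} {M : ℝ}
    (hM : ∀ t ∈ Ioo (0 : ℝ) 1, ⟪H (x + t • (y - x)) (y - x), y - x⟫ ≤ M) :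
    L y ≤ L x + ⟪gradient L x, y - x⟫ + M / 2 := by
  simpa using le_add_deriv_add_half_of_deriv2_le (hasDerivAt_comp_add_smul hL x (y - x))
    (hasDerivAt_inner_gradient_comp_add_smul hH x (y - x)) hM

theorem add_inner_gradient_add_half_le_of_le_hessian (hL : Differentiable ℝ L)
    (hH : ∀ x, HasFDerivAt (gradient L) (H x) x) {x y : E} {m : ℝ}
    (hm : ∀ t ∈ Ioo (0 : ℝ) 1, m ≤ ⟪H (x + t • (y - x)) (y - x), y - x⟫) :
    L x + ⟪gradient L x, y - x⟫ + m / 2 ≤ L y := by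
  have := le_add_deriv_add_half_of_deriv2_le
    (fun t => (hasDerivAt_comp_add_smul hL x (y - x) t).neg)
    (fun t => (hasDerivAt_inner_gradient_comp_add_smul hH x (y - x) t).neg)
    (M := -m) fun t ht => neg_le_neg (hm t ht)
  simp only [Pi.neg_apply, zero_smul, one_smul, add_zero, add_sub_cancel] at this
  linarith

namespace IsHessianStableOn

variable {τ : ℝ} {s : Set E}

theorem le_add_inner_gradient_add (hs : IsHessianStableOn H τ s) (hconv : Convex ℝ s)
    (hL : Differentiable ℝ L) (hH : ∀ x, HasFDerivAt (gradient L) (H x) x) {x y : E}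
    (hx : x ∈ s) (hy : y ∈ s) :
    L y ≤ L x + ⟪gradient L x, y - x⟫ + τ * ⟪H x (y - x), y - x⟫ / 2 := by
  refine le_add_inner_gradient_add_half_of_hessian_le hL hH fun t ht => ?_
  refine hs.inner_le_of_sub_eq_smul hx (hconv.add_smul_sub_mem hx hy (Ioo_subset_Icc_self ht))
    (neg_ne_zero.2 ht.1.ne') ?_
  module

theorem add_inner_gradient_add_le (hs : IsHessianStableOn H τ s) (hconv : Convex ℝ s)
    (hτ : 0 < τ) (hL : Differentiable ℝ L) (hH : ∀ x, HasFDerivAt (gradient L) (H x) x)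
    {x y : E} (hx : x ∈ s) (hy : y ∈ s) :
    L x + ⟪gradient L x, y - x⟫ + ⟪H x (y - x), y - x⟫ / (2 * τ) ≤ L y := by
  rw [← div_div, div_right_comm]
  refine add_inner_gradient_add_half_le_of_le_hessian hL hH fun t ht => ?_
  rw [div_le_iff₀' hτ]
  refine hs.inner_le_of_sub_eq_smul (hconv.add_smul_sub_mem hx hy (Ioo_subset_Icc_self ht)) hx
    ht.1.ne' ?_
  module

theorem sub_le_mul_inner_newton (hs : IsHessianStableOn H τ s) (hconv : Convex ℝ s)
    (hτ : 0 < τ) (hL : Differentiable ℝ L) (hH : ∀ x, HasFDerivAt (gradient L) (H x) x)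
    {x z v : E} (hx : x ∈ s) (hz : z ∈ s) (hA : (H x).IsPositive) (hv : H x v = gradient L x) :
    2 * (L x - L z) ≤ τ * ⟪H x v, v⟫ := by
  have hlow := hs.add_inner_gradient_add_le hconv hτ hL hH hx hz
  rw [← hv] at hlow
  have hquad : ⟪H x (z - x), z - x⟫ ≤ 2 * τ * (L z - L x - ⟪H x v, z - x⟫) := by
    rw [← div_le_iff₀' (by positivity)]
    linarith
  -- completing the square: the lower model is minimized over `z - x` at `-τ • v`
  have hsq := hA.two_mul_inner_le (-(τ • v)) (z - x)
  simp only [map_neg, map_smul, inner_neg_left, inner_neg_right, real_inner_smul_left,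
    real_inner_smul_right] at hsq
  refine le_of_mul_le_mul_left ?_ hτ
  linarith

theorem le_sub_half_inner_newton (hs : IsHessianStableOn H τ s) (hconv : Convex ℝ s)
    (hτ : 0 ≤ τ) (hL : Differentiable ℝ L) (hH : ∀ x, HasFDerivAt (gradient L) (H x) x)
    {x v n : E} {η : ℝ} (hx : x ∈ s) (hx' : x - η • v + η • n ∈ s) (hA : (H x).IsPositive)
    (hv : H x v = gradient L x) (hη : 0 ≤ η) (hητ : τ * η ≤ 1 / 2) :
    L (x - η • v + η • n) ≤
      L x - η / 2 * ⟪H x v, v⟫ + (η * ⟪gradient L x, n⟫ + τ * η ^ 2 * ⟪H x n, n⟫) := by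
  have hup := hs.le_add_inner_gradient_add hconv hL hH hx hx'
  have hd : x - η • v + η • n - x = η • (n - v) := by module
  have hgv : ⟪gradient L x, v⟫ = ⟪H x v, v⟫ := by rw [hv]
  have hsymm : ⟪H x v, n⟫ = ⟪H x n, v⟫ := by
    rw [hA.inner_left_eq_inner_right, real_inner_comm]
  have hsq := hA.two_mul_inner_le n (-v)
  simp only [hd, map_smul, map_sub, map_neg, inner_sub_left, inner_sub_right, inner_neg_left,
    inner_neg_right, real_inner_smul_left, real_inner_smul_right, neg_neg, hgv, hsymm] at hup hsq
  have hnoise := mul_le_mul_of_nonneg_left hsq (by positivity : 0 ≤ τ * η ^ 2 / 2)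
  have hdamp := mul_nonneg (mul_nonneg hη (hA.inner_nonneg_left v))
    (by linarith : 0 ≤ 1 / 2 - τ * η)
  linarith

theorem sub_le_mul_sub_add (hs : IsHessianStableOn H τ s) (hconv : Convex ℝ s)
    (hτ : 0 < τ) (hL : Differentiable ℝ L) (hH : ∀ x, HasFDerivAt (gradient L) (H x) x)
    {x z v n : E} {η B Bbar ε : ℝ} (hz : z ∈ s) (hx : x ∈ s) (hx' : x - η • v + η • n ∈ s)
    (hA : (H x).IsPositive) (hv : H x v = gradient L x) (hη : 0 < η) (hητ : η ≤ 1 / (2 * τ))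
    (hB : ‖gradient L x‖ ≤ B) (hBbar : ‖H x‖ ≤ Bbar) (hn : ‖n‖ ≤ ε) :
    L (x - η • v + η • n) - L z ≤
      (1 - η / τ) * (L x - L z) + (η * B * ε + η ^ 2 * Bbar * τ * ε ^ 2) := by
  have hτη : τ * η ≤ 1 / 2 := by
    rw [le_div_iff₀ (by positivity)] at hητ
    linarith
  have hdesc := hs.le_sub_half_inner_newton hconv hτ.le hL hH hx hx' hA hv hη.le hτη
  have hgap := hs.sub_le_mul_inner_newton hconv hτ hL hH hx hz hA hv
  have hrate : η / τ * (L x - L z) ≤ η / 2 * ⟪H x v, v⟫ := by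
    rw [div_mul_eq_mul_div, div_le_iff₀ hτ]
    nlinarith
  have hgrad : η * ⟪gradient L x, n⟫ ≤ η * (B * ε) := mul_le_mul_of_nonneg_left
    ((real_inner_le_norm _ _).trans (mul_le_mul hB hn (norm_nonneg _) ((norm_nonneg _).trans hB)))
    hη.le
  have hhess := mul_le_mul_of_nonneg_left ((H x).inner_apply_self_le hBbar hn)
    (by positivity : 0 ≤ τ * η ^ 2)
  linarith

end IsHessianStableOn

end InnerProductSpace

theorem stmt_16_general {p : ℕ} (L : EuclideanSpace ℝ (Fin p) → ℝ) (B Bbar τ₀ η ε : ℝ) (K : ℕ)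
    (hC2 : ContDiff ℝ 2 L)
    (H : EuclideanSpace ℝ (Fin p) → (EuclideanSpace ℝ (Fin p) →L[ℝ] EuclideanSpace ℝ (Fin p)))
    (hH : ∀ x, HasFDerivAt (gradient L) (H x) x)
    (hgrad : ∀ x : EuclideanSpace ℝ (Fin p), ‖gradient L x‖ ≤ B)
    (hHess : ∀ x : EuclideanSpace ℝ (Fin p), ‖H x‖ ≤ Bbar)
    (θhat : EuclideanSpace ℝ (Fin p))
    (Θ₀ : Set (EuclideanSpace ℝ (Fin p))) (hconv : Convex ℝ Θ₀) (hhat : θhat ∈ Θ₀)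
    (hPD : ∀ θ ∈ Θ₀, ∀ u : EuclideanSpace ℝ (Fin p), u ≠ 0 → 0 < ⟪u, H θ u⟫)
    (hτ₀ : 1 ≤ τ₀)
    (hstab : ∀ θ₁ ∈ Θ₀, ∀ θ₂ ∈ Θ₀,
      ⟪θ₁ - θ₂, H θ₂ (θ₁ - θ₂)⟫ ≤ τ₀ * ⟪θ₁ - θ₂, H θ₁ (θ₁ - θ₂)⟫)
    (hη : 0 < η) (hηle : η ≤ 1 / (2 * τ₀)) (hε : 0 ≤ ε)
    (θ N : ℕ → EuclideanSpace ℝ (Fin p))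
    (hrec : ∀ k < K,
      θ (k + 1) = θ k - η • Ring.inverse (H (θ k)) (gradient L (θ k)) + η • N k)
    (hN : ∀ k < K, ‖N k‖ ≤ ε)
    (hin : ∀ k ≤ K, θ k ∈ Θ₀) :
    L (θ K) - L θhat ≤
      (1 - η / τ₀) ^ K * (L (θ 0) - L θhat) +
        (τ₀ / η) * (η * B * ε + η ^ 2 * Bbar * τ₀ * ε ^ 2) := by
  have hτ : 0 < τ₀ := by linarith
  have hL : Differentiable ℝ L := hC2.differentiable (by norm_num)
  have hstable : IsHessianStableOn H τ₀ Θ₀ := hstab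
  have hstep : ∀ k < K, L (θ (k + 1)) - L θhat ≤
      (1 - η / τ₀) * (L (θ k) - L θhat) + (η * B * ε + η ^ 2 * Bbar * τ₀ * ε ^ 2) := by
    intro k hk
    have hθk := hin k hk.le
    have hnext := hin (k + 1) hk
    rw [hrec k hk] at hnext ⊢
    exact hstable.sub_le_mul_sub_add hconv hτ hL hH hhat hθk hnext
      (isPositive_of_hasFDerivAt_gradient hL hH (hPD _ hθk))
      (ContinuousLinearMap.apply_ringInverse_apply
        (ContinuousLinearMap.isUnit_of_forall_inner_pos (hPD _ hθk)) _)
      hη hηle (hgrad _) (hHess _) (hN k hk)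
  have hB : 0 ≤ B := (norm_nonneg _).trans (hgrad θhat)
  have hBbar : 0 ≤ Bbar := (norm_nonneg _).trans (hHess θhat)
  have hητ : η / τ₀ ≤ 1 := by
    rw [div_le_one hτ]
    calc η ≤ 1 / (2 * τ₀) := hηle
      _ ≤ 1 / 2 := by gcongr; linarith
      _ ≤ τ₀ := by linarith
  convert le_pow_mul_add_div_of_le_mul_add (a := fun k => L (θ k) - L θhat) (by positivity) hητ
    (by positivity) hstep using 2
  field_simp

/-- deterministic core of Proposition 2: global linear decrease of the
suboptimality gap for the damped noisy Newton method under `τ₀`-Hessian stability. -/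
theorem stmt_16 {p : ℕ} (L : EuclideanSpace ℝ (Fin p) → ℝ) (B Bbar τ₀ η ε : ℝ) (K : ℕ)
    (hC2 : ContDiff ℝ 2 L)
    (H : EuclideanSpace ℝ (Fin p) → (EuclideanSpace ℝ (Fin p) →L[ℝ] EuclideanSpace ℝ (Fin p)))
    (hH : ∀ x, HasFDerivAt (gradient L) (H x) x)
    (hgrad : ∀ x : EuclideanSpace ℝ (Fin p), ‖gradient L x‖ ≤ B)
    (hHess : ∀ x : EuclideanSpace ℝ (Fin p), ‖H x‖ ≤ Bbar)
    (θhat : EuclideanSpace ℝ (Fin p)) (hmin : ∀ θ, L θhat ≤ L θ)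
    (Θ₀ : Set (EuclideanSpace ℝ (Fin p))) (hconv : Convex ℝ Θ₀) (hhat : θhat ∈ Θ₀)
    (hPD : ∀ θ ∈ Θ₀, ∀ u : EuclideanSpace ℝ (Fin p), u ≠ 0 → 0 < ⟪u, H θ u⟫)
    (hτ₀ : 1 ≤ τ₀)
    (hstab : ∀ θ₁ ∈ Θ₀, ∀ θ₂ ∈ Θ₀,
      ⟪θ₁ - θ₂, H θ₂ (θ₁ - θ₂)⟫ ≤ τ₀ * ⟪θ₁ - θ₂, H θ₁ (θ₁ - θ₂)⟫)
    (hη : 0 < η) (hηle : η ≤ 1 / (2 * τ₀)) (hε : 0 ≤ ε)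
    (θ N : ℕ → EuclideanSpace ℝ (Fin p))
    (hrec : ∀ k < K,
      θ (k + 1) = θ k - η • Ring.inverse (H (θ k)) (gradient L (θ k)) + η • N k)
    (hN : ∀ k < K, ‖N k‖ ≤ ε)
    (hin : ∀ k ≤ K, θ k ∈ Θ₀) :
    L (θ K) - L θhat ≤
      (1 - η / τ₀) ^ K * (L (θ 0) - L θhat) +
        (τ₀ / η) * (η * B * ε + η ^ 2 * Bbar * τ₀ * ε ^ 2) :=
  stmt_16_general L B Bbar τ₀ η ε K hC2 H hH hgrad hHess θhat Θ₀ hconv hhat hPD hτ₀ hstab hη hηle hε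
    θ N hrec hN hin
end
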